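/- For every irrational q ∈ (0,1/2), the sequence α_q = 1 0^{κ_1(q)} 11 0^{κ_2(q)} 11 0^{κ_3(q)} 11 ⋯ belongs to KS and has height q(α_q) = q; moreover α_q is the unique element of KS of height q: every α ∈ KS with q(α) = q equals α_q. -/

import Mathlib

open Set

/-- Binary sequences. -/
abbrev Bseq := ℕ → Fin 2

/-- The strict unimodal order on binary sequences: `α ≺ β` iff at the least index `r` where
they differ, the sum `∑_{i=0}^r α_i` is even. -/
def umLT (α β : Bseq) : Prop :=
  ∃ r : ℕ, (∀ i, i < r → α i = β i) ∧ α r ≠ β r ∧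
    Even (∑ i ∈ Finset.range (r + 1), ((α i : ℕ)))

/-- `α ⪯ β` in the unimodal order. -/
def umLE (α β : Bseq) : Prop := umLT α β ∨ α = β

/-- The `r`-fold shift `σ^r`. -/
def shiftSeq (r : ℕ) (α : Bseq) : Bseq := fun i => α (i + r)

/-- A sequence is maximal if all its shifts are `⪯` it. -/
def MaximalSeq (α : Bseq) : Prop := ∀ r : ℕ, umLE (shiftSeq r α) α

/-- Membership in `KS`: maximal sequences whose first two symbols are `10`. -/
def KSseq (α : Bseq) : Prop := MaximalSeq α ∧ α 0 = 1 ∧ α 1 = 0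

/-- A (purely) periodic sequence. -/
def PeriodicSeq (α : Bseq) : Prop := ∃ p : ℕ, 0 < p ∧ ∀ i, α (i + p) = α i

/-- The periodic sequence `W^∞` determined by a finite word `W`. -/
def perSeq (W : List (Fin 2)) : Bseq := fun i => W.getD (i % W.length) 0

/-- The sequence `V W^∞`. -/
def preperSeq (V W : List (Fin 2)) : Bseq :=
  fun i => if i < V.length then V.getD i 0 else perSeq W (i - V.length)

/-- The sequence `10 1^∞`. -/
def seq101 : Bseq := fun i => if i = 1 then 0 else 1

/-- The sequence `1σ²(α)`: `1` followed by `α₂ α₃ ⋯`. -/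
def oneShift2 (α : Bseq) : Bseq := fun i => if i = 0 then 1 else α (i + 1)

/-- `κ_i(q)`: `κ_1(q) = ⌊1/q⌋ - 1`, and `κ_i(q) = ⌊i/q⌋ - ⌊(i-1)/q⌋ - 2` for `i ≥ 2`. -/
noncomputable def kap (q : ℝ) (i : ℕ) : ℕ :=
  if i = 1 then (⌊1 / q⌋ - 1).toNat
  else (⌊(i : ℝ) / q⌋ - ⌊((i : ℝ) - 1) / q⌋ - 2).toNat

/-- The word `1 0^{κ_j(q)} 11 0^{κ_{j+1}(q)} 11 ⋯ 11 0^{κ_{j+M}(q)}`: an initial block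
indexed `j` followed by `M` further blocks. -/
noncomputable def tailBody (q : ℝ) (j M : ℕ) : List (Fin 2) :=
  1 :: (List.replicate (kap q j) 0 ++
    (((List.range M).map fun t => 1 :: 1 :: List.replicate (kap q (j + 1 + t)) 0).flatten))

/-- The word `c_q = 1 0^{κ_1(q)} 11 0^{κ_2(q)} 11 ⋯ 11 0^{κ_m(q)} 1`. -/
noncomputable def cqWord (q : ℝ) (m : ℕ) : List (Fin 2) := tailBody q 1 (m - 1) ++ [1]

/-- The word `w_q`, obtained from `c_q` by deleting its last two symbols. -/
noncomputable def wqWord (q : ℝ) (m : ℕ) : List (Fin 2) := (cqWord q m).dropLast.dropLast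

/-- The word `ŵ_q`, the reverse of `w_q`. -/
noncomputable def hwqWord (q : ℝ) (m : ℕ) : List (Fin 2) := (wqWord q m).reverse

/-- The finite word `1 0^{κ_j(q)} 11 0^{κ_{j+1}(q)} ⋯ 11 0^{κ_m(q)} 1`. -/
noncomputable def tailWord (q : ℝ) (j m : ℕ) : List (Fin 2) := tailBody q j (m - j) ++ [1]

/-- The word `1 0^{κ_1(q)-1} 11 0^{κ_2(q)} 11 ⋯` with `M` blocks after the first
(no closing `1`). -/
noncomputable def lowBody (q : ℝ) (M : ℕ) : List (Fin 2) :=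
  1 :: (List.replicate (kap q 1 - 1) 0 ++
    (((List.range M).map fun t => 1 :: 1 :: List.replicate (kap q (2 + t)) 0).flatten))

/-- The finite word `1 0^{κ_1(q)-1} 11 0^{κ_2(q)} ⋯ 11 0^{κ_m(q)} 1`. -/
noncomputable def lowWord (q : ℝ) (m : ℕ) : List (Fin 2) := lowBody q (m - 1) ++ [1]

/-- The infinite sequence `1 0^{κ_j(q)} 11 0^{κ_{j+1}(q)} 11 0^{κ_{j+2}(q)} 11 ⋯`. -/
noncomputable def tailSeq (q : ℝ) (j : ℕ) : Bseq := fun i => (tailBody q j (i + 1)).getD i 0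

/-- The infinite sequence `1 0^{κ_1(q)-1} 11 0^{κ_2(q)} 11 0^{κ_3(q)} 11 ⋯`. -/
noncomputable def lowSeq (q : ℝ) : Bseq := fun i => (lowBody q (i + 1)).getD i 0

/-- The height `q(α) = inf({q ∈ (0,1/2] ∩ ℚ : (c_q0)^∞ ≺ α} ∪ {1/2})`. -/
noncomputable def height (α : Bseq) : ℝ :=
  sInf ({x : ℝ | ∃ q : ℚ, x = (q : ℝ) ∧ 0 < q ∧ q ≤ 1 / 2 ∧
    umLT (perSeq (cqWord (q : ℝ) q.num.toNat ++ [0])) α} ∪ {1 / 2})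

/-- A unimodal map `f : [a,b] → [a,b]` with turning point `c`. -/
structure Unimodal (a b c : ℝ) (f : ℝ → ℝ) : Prop where
  a_lt_b : a < b
  c_mem : c ∈ Ioo a b
  cont : ContinuousOn f (Icc a b)
  maps : MapsTo f (Icc a b) (Icc a b)
  mono : StrictMonoOn f (Icc a c)
  anti : StrictAntiOn f (Icc c b)
  map_c : f c = b
  map_b : f b = a

/-- `α` is an itinerary of `x` under the unimodal map `f` with turning point `c`. -/
def IsItin (f : ℝ → ℝ) (a b c x : ℝ) (α : Bseq) : Prop :=
  ∀ r : ℕ, (α r = 0 → f^[r] x ∈ Icc a c) ∧ (α r = 1 → f^[r] x ∈ Icc c b)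

/-- `κ` is the kneading sequence of `f`: the itinerary of `b` smallest in the unimodal order. -/
def IsKneading (f : ℝ → ℝ) (a b c : ℝ) (κ : Bseq) : Prop :=
  IsItin f a b c b κ ∧ ∀ β : Bseq, IsItin f a b c b β → umLE κ β

/-- The standing convention on unimodal maps. -/
structure Convention (f : ℝ → ℝ) (a b c : ℝ) (κ : Bseq) : Prop where
  kneading : IsKneading f a b c κ
  gt101 : umLT seq101 κ
  itin_inj : ¬ PeriodicSeq κ → ∀ x ∈ Icc a b, ∀ y ∈ Icc a b, ∀ α : Bseq,
      IsItin f a b c x α → IsItin f a b c y α → x = y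
  two_fixed : ∀ n : ℕ, 0 < n → ∀ μ : Bseq,
      {x | x ∈ Icc a b ∧ f^[n] x = x ∧ IsItin f a b c x μ}.encard ≤ 2 ∧
      ∀ x ∈ {x | x ∈ Icc a b ∧ f^[n] x = x ∧ IsItin f a b c x μ},
        ∀ y ∈ {x | x ∈ Icc a b ∧ f^[n] x = x ∧ IsItin f a b c x μ},
          x ≠ y → ∃ r : ℕ, κ = shiftSeq r μ


/-!
With `b(i) = ⌊i/q⌋`, the sequence `α_q` has a `1` at position `0`, blocks `11` at positions
`b(i), b(i)+1` for `i ≥ 1`, and `0` elsewhere; for rational `p = m/n` the sequence `(c_p 0)^∞`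
agrees with `α_p` up to position `n = b_p(m)` and has a `0` at position `n + 1`. Two such block
sequences first differ where their block positions first differ; the one whose block comes first
has an even number of ones up to there, so it is the smaller one. Since `b_p ≤ b_q` for `p ≥ q`,
this gives `(c_p 0)^∞ ≺ α_q` for `p > q` and `α_q ≺ (c_p 0)^∞` for `p < q`, so `α_q` has height `q`.
The shift of `α_q` after a block is the block sequence with positions `b(i+t) - b(i) - 1 ≤ b(t)`,
and the density of `t/q mod 1` gives a `t` without carry, where this is strict: `α_q` is maximal.
Finally, rationals `p` near `q` have large denominators and the same `b_p(i)` for small `i`, so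
`(c_p 0)^∞` shares any given prefix with `α_q`; hence every `α ≠ α_q` has height `≠ q`.
-/

open Filter Topology

lemma Fin.val_add_val_eq_one_of_ne {a b : Fin 2} (h : a ≠ b) : (a : ℕ) + b = 1 := by
  revert a b; decide

lemma Rat.cast_le_half_iff {p : ℚ} : (p : ℝ) ≤ 1 / 2 ↔ p ≤ 1 / 2 := by
  rw [show (1 / 2 : ℝ) = ((1 / 2 : ℚ) : ℝ) by norm_num, Rat.cast_le]

section UnimodalOrder

variable {α β γ : Bseq}

lemma sum_range_eq_of_eqOn {r : ℕ} (h : ∀ i < r, α i = β i) :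
    ∑ i ∈ Finset.range r, (α i : ℕ) = ∑ i ∈ Finset.range r, (β i : ℕ) :=
  Finset.sum_congr rfl fun i hi => by rw [h i (Finset.mem_range.mp hi)]

lemma even_sum_iff_not_even_sum {r : ℕ} (hagree : ∀ i < r, α i = β i) (hne : α r ≠ β r) :
    Even (∑ i ∈ Finset.range (r + 1), (α i : ℕ)) ↔
      ¬ Even (∑ i ∈ Finset.range (r + 1), (β i : ℕ)) := by
  have hsum := sum_range_eq_of_eqOn hagree
  have hval := Fin.val_add_val_eq_one_of_ne hne
  simp only [Finset.sum_range_succ, Nat.even_iff]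
  omega

lemma umLT_iff_even_sum {r : ℕ} (hagree : ∀ i < r, α i = β i) (hne : α r ≠ β r) :
    umLT α β ↔ Even (∑ i ∈ Finset.range (r + 1), (α i : ℕ)) := by
  refine ⟨fun ⟨r', hagree', hne', heven⟩ => ?_, fun h => ⟨r, hagree, hne, h⟩⟩
  obtain rfl : r' = r := by
    rcases lt_trichotomy r' r with h | h | h
    · exact absurd (hagree r' h) hne'
    · exact h
    · exact absurd (hagree' r h) hne
  exact heven

lemma umLT_asymm (h : umLT α β) : ¬ umLT β α := fun ⟨_, hagree, hne, heven⟩ =>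
  (even_sum_iff_not_even_sum hagree hne).mp heven <|
    (umLT_iff_even_sum (fun i hi => (hagree i hi).symm) (Ne.symm hne)).mp h

lemma umLT_trans (hαβ : umLT α β) (hβγ : umLT β γ) : umLT α γ := by
  obtain ⟨r, hagree, hne, heven⟩ := hαβ
  obtain ⟨s, hagree', hne', heven'⟩ := hβγ
  rcases lt_trichotomy r s with h | rfl | h
  · exact ⟨r, fun i hi => (hagree i hi).trans (hagree' i (hi.trans h)), hagree' r h ▸ hne, heven⟩
  · exact absurd heven' ((even_sum_iff_not_even_sum hagree hne).mp heven)
  · refine ⟨s, fun i hi => (hagree i (hi.trans h)).trans (hagree' i hi), (hagree s h).symm ▸ hne',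
      ?_⟩
    rwa [sum_range_eq_of_eqOn fun i hi => hagree i (by omega)]

lemma exists_first_ne (h : α ≠ β) : ∃ r, (∀ i < r, α i = β i) ∧ α r ≠ β r := by
  classical
  have hex : ∃ r, α r ≠ β r := not_forall.mp fun h' => h (funext h')
  exact ⟨Nat.find hex, fun i hi => not_not.mp (Nat.find_min hex hi), Nat.find_spec hex⟩

lemma umLT_or_umLT_of_ne (h : α ≠ β) : umLT α β ∨ umLT β α := by
  obtain ⟨r, hagree, hne⟩ := exists_first_ne h
  by_cases heven : Even (∑ i ∈ Finset.range (r + 1), (α i : ℕ))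
  · exact Or.inl ⟨r, hagree, hne, heven⟩
  · refine Or.inr ⟨r, fun i hi => (hagree i hi).symm, Ne.symm hne, ?_⟩
    exact not_not.mp fun h' => heven ((even_sum_iff_not_even_sum hagree hne).mpr h')

lemma umLT_of_eqOn_prefix {α' β' : Bseq} {n k : ℕ} (hα : ∀ i ≤ n, α i = α' i)
    (hβ : ∀ i ≤ n, β i = β' i) (hk : k ≤ n) (hne : α k ≠ β k) (h : umLT α β) : umLT α' β' := by
  obtain ⟨r, hagree, hner, heven⟩ := h
  have hr : r ≤ k := not_lt.mp fun hkr => hne (hagree k hkr)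
  refine ⟨r, fun i hi => ?_, ?_, ?_⟩
  · rw [← hα i (by omega), ← hβ i (by omega)]; exact hagree i hi
  · rwa [← hα r (by omega), ← hβ r (by omega)]
  · rwa [← sum_range_eq_of_eqOn fun i hi => hα i (by omega)]

end UnimodalOrder

lemma Irrational.exists_pos_nat_fract_mul_lt {θ : ℝ} (hθ : Irrational θ) {c : ℝ} (hc : 0 < c) :
    ∃ n : ℕ, 0 < n ∧ Int.fract (n * θ) < c := by
  have : Fact ((0 : ℝ) < 1) := ⟨one_pos⟩
  have hdense : DenseRange fun n : ℕ => n • (θ : AddCircle (1 : ℝ)) :=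
    denseRange_zsmul_iff_nsmul.mp (AddCircle.denseRange_zsmul_coe_iff.mpr (by simpa using hθ))
  have hopen : IsOpen (((↑) : ℝ → AddCircle (1 : ℝ)) '' Ioo 0 (min c 1)) :=
    QuotientAddGroup.isOpenMap_coe _ isOpen_Ioo
  obtain ⟨n, x, hx, hxn⟩ := hdense.exists_mem_open hopen
    ⟨_, _, ⟨half_pos (lt_min hc one_pos), half_lt_self (lt_min hc one_pos)⟩, rfl⟩
  rw [← AddCircle.coe_nsmul, QuotientAddGroup.eq] at hxn
  obtain ⟨k, hk⟩ := AddSubgroup.mem_zmultiples_iff.mp hxn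
  have hfract : Int.fract (n * θ) = x := by
    rw [show (n : ℝ) * θ = x + k by
      rw [zsmul_eq_mul, mul_one, nsmul_eq_mul] at hk; linarith, Int.fract_add_intCast,
      Int.fract_eq_self.mpr ⟨hx.1.le, hx.2.trans_le (min_le_right _ _)⟩]
  refine ⟨n, Nat.pos_of_ne_zero ?_, hfract ▸ hx.2.trans_le (min_le_left _ _)⟩
  rintro rfl
  simp only [CharP.cast_eq_zero, zero_mul, Int.fract_zero] at hfract
  exact hx.1.ne hfract

section Beatty

noncomputable def beatty (q : ℝ) (i : ℕ) : ℕ := ⌊(i : ℝ) / q⌋₊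

variable {q : ℝ}

@[simp]
lemma beatty_zero : beatty q 0 = 0 := by simp [beatty]

lemma beatty_add_two_le (hq : 0 < q) (hq2 : q ≤ 1 / 2) (i : ℕ) :
    beatty q i + 2 ≤ beatty q (i + 1) := by
  have h2 : 2 ≤ 1 / q := by rw [le_div_iff₀ hq]; linarith
  have hstep : (i : ℝ) / q + 2 ≤ ((i + 1 : ℕ) : ℝ) / q := by
    rw [Nat.cast_succ, add_div]; linarith
  calc beatty q i + 2 = ⌊(i : ℝ) / q + 2⌋₊ := (Nat.floor_add_ofNat (by positivity) 2).symm
    _ ≤ beatty q (i + 1) := Nat.floor_le_floor hstep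

lemma two_mul_le_beatty (hq : 0 < q) (hq2 : q ≤ 1 / 2) (i : ℕ) : 2 * i ≤ beatty q i := by
  induction i with
  | zero => simp
  | succ i ih => have := beatty_add_two_le hq hq2 i; omega

lemma beatty_anti {q' : ℝ} (hq : 0 < q) (hqq' : q ≤ q') (i : ℕ) : beatty q' i ≤ beatty q i :=
  Nat.floor_le_floor (div_le_div_of_nonneg_left (Nat.cast_nonneg i) hq hqq')

lemma beatty_add_le (hq : 0 < q) (i j : ℕ) : beatty q (i + j) ≤ beatty q i + beatty q j + 1 := by
  have hi := Nat.lt_floor_add_one ((i : ℝ) / q)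
  have hj := Nat.lt_floor_add_one ((j : ℝ) / q)
  refine Nat.lt_add_one_iff.mp ((Nat.floor_lt (by positivity)).mpr ?_)
  rw [Nat.cast_add, add_div]
  push_cast
  unfold beatty
  linarith

/-- As `1/q` is irrational, `Int.fract (j/q)` can be made so small that adding `j/q` to `i/q`
causes no carry. -/
lemma exists_beatty_add_eq (hq : 0 < q) (hirr : Irrational q) (i : ℕ) :
    ∃ j, 0 < j ∧ beatty q (i + j) = beatty q i + beatty q j := by
  obtain ⟨j, hj, hfract⟩ := hirr.inv.exists_pos_nat_fract_mul_lt
    (sub_pos.mpr (Nat.lt_floor_add_one ((i : ℝ) / q)))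
  refine ⟨j, hj, le_antisymm ?_ ?_⟩
  · refine Nat.lt_add_one_iff.mp ((Nat.floor_lt (by positivity)).mpr ?_)
    have hjq : (j : ℝ) / q = ⌊(j : ℝ) / q⌋₊ + Int.fract ((j : ℝ) * q⁻¹) := by
      rw [← div_eq_mul_inv, natCast_floor_eq_intCast_floor (by positivity),
        Int.floor_add_fract]
    rw [Nat.cast_add, add_div, hjq]
    push_cast
    unfold beatty
    linarith
  · refine Nat.le_floor ?_
    rw [Nat.cast_add, Nat.cast_add, add_div]
    exact add_le_add (Nat.floor_le (by positivity)) (Nat.floor_le (by positivity))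

/-- `i / q` is not an integer, so `x ↦ ⌊i / x⌋` is locally constant at `q`. -/
lemma eventually_beatty_eq (hq : 0 < q) (hirr : Irrational q) (i : ℕ) :
    ∀ᶠ x in 𝓝 q, beatty x i = beatty q i := by
  rcases Nat.eq_zero_or_pos i with rfl | hi
  · simp
  have hne : (i : ℝ) / q ≠ beatty q i := by
    rw [div_eq_mul_inv]; exact (hirr.inv.natCast_mul hi.ne').ne_nat _
  have hmem : (i : ℝ) / q ∈ Ioo (beatty q i : ℝ) (beatty q i + 1) :=
    ⟨lt_of_le_of_ne (Nat.floor_le (by positivity)) hne.symm, Nat.lt_floor_add_one _⟩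
  have hcont : ContinuousAt (fun x : ℝ => (i : ℝ) / x) q :=
    continuousAt_const.div continuousAt_id hq.ne'
  filter_upwards [hcont.eventually (isOpen_Ioo.mem_nhds hmem)] with x hx
  exact Nat.floor_eq_on_Ico _ _ ⟨hx.1.le, hx.2⟩

lemma kap_one (hq : 0 < q) (hq2 : q ≤ 1 / 2) : kap q 1 + 1 = beatty q 1 := by
  have h := beatty_add_two_le hq hq2 0
  have hcast := Int.natCast_floor_eq_floor (show (0 : ℝ) ≤ 1 / q by positivity)
  simp only [kap, if_pos, beatty, Nat.cast_one, zero_add] at h ⊢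
  omega

lemma kap_succ (hq : 0 < q) (hq2 : q ≤ 1 / 2) {i : ℕ} (hi : 1 ≤ i) :
    beatty q i + 2 + kap q (i + 1) = beatty q (i + 1) := by
  have h := beatty_add_two_le hq hq2 i
  have hcast := Int.natCast_floor_eq_floor (show (0 : ℝ) ≤ i / q by positivity)
  have hcast' := Int.natCast_floor_eq_floor (show (0 : ℝ) ≤ ((i + 1 : ℕ) : ℝ) / q by positivity)
  simp only [kap, if_neg (show i + 1 ≠ 1 by omega),
    show ((i + 1 : ℕ) : ℝ) - 1 = i by push_cast; ring]
  unfold beatty at h ⊢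
  omega

end Beatty

section BlockSeq

open Classical in
noncomputable def blockSeq (g : ℕ → ℕ) : Bseq := fun k =>
  if k = 0 ∨ ∃ i, 1 ≤ i ∧ (k = g i ∨ k = g i + 1) then 1 else 0

def BlockSpaced (g : ℕ → ℕ) : Prop := 1 ≤ g 1 ∧ ∀ i, 1 ≤ i → g i + 2 ≤ g (i + 1)

variable {g g' : ℕ → ℕ} {i j k : ℕ}

lemma blockSeq_zero (g : ℕ → ℕ) : blockSeq g 0 = 1 := if_pos (Or.inl rfl)

lemma blockSeq_self (hi : 1 ≤ i) : blockSeq g (g i) = 1 := if_pos (Or.inr ⟨i, hi, Or.inl rfl⟩)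

lemma blockSeq_self_add_one (hi : 1 ≤ i) : blockSeq g (g i + 1) = 1 :=
  if_pos (Or.inr ⟨i, hi, Or.inr rfl⟩)

namespace BlockSpaced

lemma add_two_le (hg : BlockSpaced g) (hi : 1 ≤ i) (hij : i < j) : g i + 2 ≤ g j := by
  induction j, hij using Nat.le_induction with
  | base => exact hg.2 i hi
  | succ j hij ih => have := hg.2 j (by omega); omega

lemma mono (hg : BlockSpaced g) (hi : 1 ≤ i) (hij : i ≤ j) : g i ≤ g j := by
  rcases hij.eq_or_lt with rfl | h
  · rfl
  · have := hg.add_two_le hi h; omega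

lemma one_le (hg : BlockSpaced g) (hi : 1 ≤ i) : 1 ≤ g i := hg.1.trans (hg.mono le_rfl hi)

lemma blockSeq_eq_zero_of_lt (hg : BlockSpaced g) (hk : 0 < k) (hk1 : k < g 1) :
    blockSeq g k = 0 := by
  refine if_neg ?_
  rintro (rfl | ⟨j, hj, hkj⟩)
  · omega
  · have := hg.mono le_rfl hj; omega

lemma blockSeq_eq_zero_of_between (hg : BlockSpaced g) (hi : 1 ≤ i) (hik : g i + 1 < k)
    (hki : k < g (i + 1)) : blockSeq g k = 0 := by
  refine if_neg ?_
  rintro (rfl | ⟨j, hj, hkj⟩)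
  · omega
  · rcases le_or_gt j i with hji | hij
    · have := hg.mono hj hji; omega
    · have := hg.mono (by omega) (show i + 1 ≤ j by omega); omega

lemma blockSeq_congr (hg : BlockSpaced g) (hg' : BlockSpaced g') {I : ℕ} (hI : 1 ≤ I)
    (heq : ∀ i, 1 ≤ i → i < I → g' i = g i) (hk : k < g I) (hk' : k < g' I) :
    blockSeq g' k = blockSeq g k := by
  classical
  have restrict : ∀ {h : ℕ → ℕ}, BlockSpaced h → k < h I →
      ((∃ i, 1 ≤ i ∧ (k = h i ∨ k = h i + 1)) ↔ ∃ i, 1 ≤ i ∧ i < I ∧ (k = h i ∨ k = h i + 1)) := by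
    intro h hh hkh
    refine ⟨fun ⟨i, hi, hki⟩ => ⟨i, hi, not_le.mp fun hIi => ?_, hki⟩,
      fun ⟨i, hi, _, hki⟩ => ⟨i, hi, hki⟩⟩
    have := hh.mono hI hIi; omega
  refine if_congr (or_congr_right ?_) rfl rfl
  rw [restrict hg' hk', restrict hg hk]
  exact exists_congr fun i => and_congr_right fun hi => and_congr_right fun hiI => by
    rw [heq i hi hiI]

lemma sum_blockSeq (hg : BlockSpaced g) {J : ℕ} (hJ : 1 ≤ J) :
    ∑ k ∈ Finset.range (g J), (blockSeq g k : ℕ) = 2 * J - 1 := by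
  induction J, hJ using Nat.le_induction with
  | base =>
    obtain ⟨n, hn⟩ : ∃ n, g 1 = n + 1 := ⟨g 1 - 1, by have := hg.1; omega⟩
    rw [hn, Finset.sum_range_succ', blockSeq_zero, Finset.sum_eq_zero fun k hk => ?_]
    · rfl
    · rw [hg.blockSeq_eq_zero_of_lt k.succ_pos (by have := Finset.mem_range.mp hk; omega)]; rfl
  | succ J hJ ih =>
    obtain ⟨d, hd⟩ : ∃ d, g (J + 1) - g J = d + 2 := ⟨g (J + 1) - g J - 2, by
      have := hg.2 J hJ; omega⟩
    rw [← Finset.sum_range_add_sum_Ico _ (hg.mono hJ J.le_succ), ih, Finset.sum_Ico_eq_sum_range,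
      hd, Finset.sum_range_succ', Finset.sum_range_succ', Finset.sum_eq_zero fun k hk => ?_]
    · rw [add_zero, blockSeq_self hJ, blockSeq_self_add_one hJ]
      simp only [Fin.isValue, Fin.val_one]
      omega
    · rw [hg.blockSeq_eq_zero_of_between hJ (by omega) (by have := Finset.mem_range.mp hk; omega)]
      rfl

lemma shiftSeq_blockSeq (hg : BlockSpaced g) (hi : 1 ≤ i) :
    shiftSeq (g i + 1) (blockSeq g) = blockSeq (fun t => g (i + t) - g i - 1) := by
  classical
  funext k
  refine if_congr ⟨?_, ?_⟩ rfl rfl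
  · rintro (h | ⟨u, hu, hku⟩)
    · omega
    rcases le_or_gt u i with hui | hiu
    · have := hg.mono hu hui
      exact Or.inl (by omega)
    · have := hg.add_two_le hi hiu
      refine Or.inr ⟨u - i, by omega, ?_⟩
      simp only [Nat.add_sub_cancel' hiu.le]
      omega
  · rintro (rfl | ⟨t, ht, hkt⟩)
    · exact Or.inr ⟨i, hi, Or.inr (by omega)⟩
    · have := hg.add_two_le hi (show i < i + t by omega)
      exact Or.inr ⟨i + t, by omega, by simp only at hkt; omega⟩

lemma shifted (hg : BlockSpaced g) (hi : 1 ≤ i) : BlockSpaced fun t => g (i + t) - g i - 1 := by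
  refine ⟨?_, fun t ht => ?_⟩
  · show 1 ≤ g (i + 1) - g i - 1
    have := hg.2 i hi; omega
  · show g (i + t) - g i - 1 + 2 ≤ g (i + (t + 1)) - g i - 1
    have := hg.2 (i + t) (by omega)
    have := hg.add_two_le hi (show i < i + t by omega)
    rw [← add_assoc]; omega

end BlockSpaced

/-- The first difference is at position `g' J`, and up to there `blockSeq g'` has `2 J` ones. -/
lemma umLT_of_blockSeq_of_first_lt (hg : BlockSpaced g) (hg' : BlockSpaced g') {J : ℕ}
    (hJ : 1 ≤ J) (heq : ∀ i, 1 ≤ i → i < J → g' i = g i) (hlt : g' J < g J) {α β : Bseq}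
    (hα : ∀ k ≤ g' J, α k = blockSeq g' k) (hβ : ∀ k ≤ g' J, β k = blockSeq g k) :
    umLT α β := by
  have hgap : blockSeq g (g' J) = 0 := by
    rcases hJ.eq_or_lt with rfl | hJ2
    · exact hg.blockSeq_eq_zero_of_lt (hg'.one_le le_rfl) hlt
    · obtain ⟨i, rfl⟩ : ∃ i, J = i + 1 := ⟨J - 1, by omega⟩
      have := hg'.2 i (by omega)
      exact hg.blockSeq_eq_zero_of_between (by omega) (by rw [← heq i (by omega) (by omega)]; omega)
        hlt
  refine ⟨g' J, fun k hk => ?_, ?_, ?_⟩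
  · rw [hα k hk.le, hβ k hk.le]
    exact hg.blockSeq_congr hg' hJ heq (hk.trans hlt) hk
  · rw [hα _ le_rfl, hβ _ le_rfl, blockSeq_self hJ, hgap]
    decide
  · rw [Finset.sum_range_succ, sum_range_eq_of_eqOn fun k hk => hα k hk.le, hg'.sum_blockSeq hJ,
      hα _ le_rfl, blockSeq_self hJ]
    exact ⟨J, by simp only [Fin.isValue, Fin.val_one]; omega⟩

lemma umLT_of_blockSeq_of_lt (hg : BlockSpaced g) (hg' : BlockSpaced g')
    (hle : ∀ i, 1 ≤ i → g' i ≤ g i) {N : ℕ} (hN : 1 ≤ N) (hlt : g' N < g N) {α β : Bseq}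
    (hα : ∀ k ≤ g' N, α k = blockSeq g' k) (hβ : ∀ k ≤ g' N, β k = blockSeq g k) :
    umLT α β := by
  classical
  have hex : ∃ J, 1 ≤ J ∧ g' J < g J := ⟨N, hN, hlt⟩
  set J := Nat.find hex
  obtain ⟨hJ, hJlt⟩ : 1 ≤ J ∧ g' J < g J := Nat.find_spec hex
  have hJN : J ≤ N := Nat.find_min' hex ⟨hN, hlt⟩
  have hpre : ∀ k ≤ g' J, k ≤ g' N := fun k hk => hk.trans (hg'.mono hJ hJN)
  refine umLT_of_blockSeq_of_first_lt hg hg' hJ (fun i hi hiJ => ?_) hJlt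
    (fun k hk => hα k (hpre k hk)) (fun k hk => hβ k (hpre k hk))
  exact le_antisymm (hle i hi) (not_lt.mp fun h => Nat.find_min hex hiJ ⟨hi, h⟩)

end BlockSeq

section Sequences

variable {q : ℝ}

lemma blockSpaced_beatty (hq : 0 < q) (hq2 : q ≤ 1 / 2) : BlockSpaced (beatty q) :=
  ⟨by have := beatty_add_two_le hq hq2 0; rw [zero_add, beatty_zero] at this; omega,
    fun i _ => beatty_add_two_le hq hq2 i⟩

lemma tailBody_one_eq (hq : 0 < q) (hq2 : q ≤ 1 / 2) (M : ℕ) :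
    tailBody q 1 M = (List.range (beatty q (M + 1))).map (blockSeq (beatty q)) := by
  have hg := blockSpaced_beatty hq hq2
  induction M with
  | zero =>
    rw [← kap_one hq hq2, List.range_succ_eq_map, List.map_cons, blockSeq_zero, List.map_map]
    simp only [tailBody, List.range_zero, List.map_nil, List.flatten_nil, List.append_nil]
    refine congrArg _ (List.eq_replicate_iff.mpr ⟨by simp, ?_⟩).symm
    simp only [List.mem_map, List.mem_range, Function.comp_apply]
    rintro _ ⟨k, hk, rfl⟩
    exact hg.blockSeq_eq_zero_of_lt k.succ_pos (by rw [← kap_one hq hq2]; omega)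
  | succ M ih =>
    have hsucc : tailBody q 1 (M + 1) =
        tailBody q 1 M ++ 1 :: 1 :: List.replicate (kap q (M + 1 + 1)) 0 := by
      simp [tailBody, List.range_succ, show 1 + 1 + M = M + 1 + 1 by omega]
    have hlen : beatty q (M + 1 + 1) = beatty q (M + 1) + (kap q (M + 1 + 1) + 1 + 1) := by
      have := kap_succ hq hq2 (show 1 ≤ M + 1 by omega); omega
    rw [hsucc, ih, hlen, List.range_add, List.map_append, List.map_map, List.range_succ_eq_map,
      List.range_succ_eq_map]
    refine congrArg _ ?_
    simp only [List.map_cons, List.map_map, Function.comp_apply, add_zero, Nat.succ_eq_add_one,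
      zero_add, blockSeq_self (show 1 ≤ M + 1 by omega),
      blockSeq_self_add_one (show 1 ≤ M + 1 by omega)]
    congr 2
    refine (List.eq_replicate_iff.mpr ⟨by simp, ?_⟩).symm
    simp only [List.mem_map, List.mem_range, Function.comp_apply]
    rintro _ ⟨k, hk, rfl⟩
    exact hg.blockSeq_eq_zero_of_between (show 1 ≤ M + 1 by omega) (by omega) (by omega)

lemma tailSeq_one_eq_blockSeq (hq : 0 < q) (hq2 : q ≤ 1 / 2) :
    tailSeq q 1 = blockSeq (beatty q) := by
  funext n
  have hn : n < beatty q (n + 1 + 1) := by have := two_mul_le_beatty hq hq2 (n + 1 + 1); omega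
  rw [tailSeq, tailBody_one_eq hq hq2, List.getD_eq_getElem _ _ (by simpa using hn),
    List.getElem_map, List.getElem_range]

lemma tailSeq_one_zero (hq : 0 < q) (hq2 : q ≤ 1 / 2) : tailSeq q 1 0 = 1 := by
  rw [tailSeq_one_eq_blockSeq hq hq2, blockSeq_zero]

lemma tailSeq_one_one (hq : 0 < q) (hq2 : q ≤ 1 / 2) : tailSeq q 1 1 = 0 := by
  rw [tailSeq_one_eq_blockSeq hq hq2]
  exact (blockSpaced_beatty hq hq2).blockSeq_eq_zero_of_lt one_pos
    (by have := two_mul_le_beatty hq hq2 1; omega)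

noncomputable def cqSeq (p : ℚ) : Bseq := perSeq (cqWord (p : ℝ) p.num.toNat ++ [0])

variable {p : ℚ}

lemma natCast_num_toNat_div (hp : 0 < p) : ((p.num.toNat : ℕ) : ℝ) / p = p.den := by
  have hnum : 0 < p.num := Rat.num_pos.mpr hp
  rw [show ((p.num.toNat : ℕ) : ℝ) = p.num by exact_mod_cast Int.toNat_of_nonneg hnum.le,
    Rat.cast_def]
  have : (p.num : ℝ) ≠ 0 := by exact_mod_cast hnum.ne'
  field_simp

lemma beatty_num_toNat (hp : 0 < p) : beatty p p.num.toNat = p.den := by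
  rw [beatty, natCast_num_toNat_div hp, Nat.floor_natCast]

lemma cqWord_append_zero (hp : 0 < p) (hp2 : p ≤ 1 / 2) :
    cqWord p p.num.toNat ++ [0] = (List.range p.den).map (blockSeq (beatty p)) ++ [1, 0] := by
  have hm : 1 ≤ p.num.toNat := by have := Rat.num_pos.mpr hp; omega
  rw [cqWord, tailBody_one_eq (by exact_mod_cast hp) (Rat.cast_le_half_iff.mpr hp2),
    Nat.sub_add_cancel hm, beatty_num_toNat hp]
  simp

lemma cqSeq_eq_blockSeq (hp : 0 < p) (hp2 : p ≤ 1 / 2) {k : ℕ} (hk : k ≤ p.den) :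
    cqSeq p k = blockSeq (beatty p) k := by
  have hlen : k < ((List.range p.den).map (blockSeq (beatty p)) ++ [1, 0]).length := by
    simp only [List.length_append, List.length_map, List.length_range, List.length_cons,
      List.length_nil]
    omega
  rw [cqSeq, perSeq, cqWord_append_zero hp hp2, Nat.mod_eq_of_lt hlen]
  rcases hk.lt_or_eq with hk | rfl
  · rw [List.getD_append _ _ _ _ (by simpa), List.getD_eq_getElem _ _ (by simpa),
      List.getElem_map, List.getElem_range]
  · have hm : 1 ≤ p.num.toNat := by have := Rat.num_pos.mpr hp; omega
    rw [List.getD_append_right _ _ _ _ (by simp)]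
    conv_rhs => rw [← beatty_num_toNat hp]
    simp [blockSeq_self hm]

lemma cqSeq_den_add_one (hp : 0 < p) (hp2 : p ≤ 1 / 2) : cqSeq p (p.den + 1) = 0 := by
  rw [cqSeq, perSeq, cqWord_append_zero hp hp2, Nat.mod_eq_of_lt (by simp)]
  simp

end Sequences

section Comparison

variable {q : ℝ} {p : ℚ}

theorem cqSeq_umLT_tailSeq (hq : 0 < q) (hqp : q < p) (hp2 : p ≤ 1 / 2) :
    umLT (cqSeq p) (tailSeq q 1) := by
  have hpR : (0 : ℝ) < p := hq.trans hqp
  have hp : 0 < p := Rat.cast_pos.mp hpR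
  have hp2R := Rat.cast_le_half_iff.mpr hp2
  have hq2 : q ≤ 1 / 2 := hqp.le.trans hp2R
  have hgp := blockSpaced_beatty hpR hp2R
  have hgq := blockSpaced_beatty hq hq2
  have hm : 1 ≤ p.num.toNat := by have := Rat.num_pos.mpr hp; omega
  have hle : ∀ i, beatty p i ≤ beatty q i := beatty_anti hq hqp.le
  rw [tailSeq_one_eq_blockSeq hq hq2]
  by_cases hdiff : ∃ N, 1 ≤ N ∧ N ≤ p.num.toNat ∧ beatty p N < beatty q N
  · obtain ⟨N, hN, hNm, hlt⟩ := hdiff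
    have hNden : beatty p N ≤ p.den := beatty_num_toNat hp ▸ hgp.mono hN hNm
    exact umLT_of_blockSeq_of_lt hgq hgp (fun i _ => hle i) hN hlt
      (fun k hk => cqSeq_eq_blockSeq hp hp2 (hk.trans hNden)) (fun _ _ => rfl)
  -- `c_p` is a prefix of `α_q`, and `(c_p 0)^∞` leaves `α_q` right after it.
  push Not at hdiff
  have heq : ∀ i, 1 ≤ i → i < p.num.toNat + 1 → beatty p i = beatty q i :=
    fun i hi him => le_antisymm (hle i) (hdiff i hi (by omega))
  have hqm : beatty q p.num.toNat = p.den := by rw [← heq _ hm (by omega), beatty_num_toNat hp]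
  have hagree : ∀ k ≤ p.den, cqSeq p k = blockSeq (beatty q) k := fun k hk => by
    have := hgq.2 _ hm
    have := hgp.2 _ hm
    rw [cqSeq_eq_blockSeq hp hp2 hk]
    exact hgq.blockSeq_congr hgp (by omega) heq (by omega) (by rw [beatty_num_toNat hp] at *; omega)
  refine ⟨p.den + 1, fun k hk => hagree k (by omega), ?_, ?_⟩
  · rw [cqSeq_den_add_one hp hp2, ← hqm, blockSeq_self_add_one hm]
    decide
  · rw [Finset.sum_range_succ, Finset.sum_range_succ, cqSeq_den_add_one hp hp2,
      sum_range_eq_of_eqOn fun k hk => cqSeq_eq_blockSeq hp hp2 hk.le,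
      cqSeq_eq_blockSeq hp hp2 le_rfl, ← beatty_num_toNat hp, hgp.sum_blockSeq hm, blockSeq_self hm]
    exact ⟨p.num.toNat, by simp only [Fin.isValue, Fin.val_one, Fin.val_zero]; omega⟩

theorem tailSeq_umLT_cqSeq (hp : 0 < p) (hpq : (p : ℝ) < q) (hq2 : q ≤ 1 / 2) :
    umLT (tailSeq q 1) (cqSeq p) := by
  have hpR : (0 : ℝ) < p := Rat.cast_pos.mpr hp
  have hp2 : p ≤ 1 / 2 := Rat.cast_le_half_iff.mp (hpq.le.trans hq2)
  have hq : 0 < q := hpR.trans hpq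
  have hm : 0 < p.num.toNat := by have := Rat.num_pos.mpr hp; omega
  have hlt : beatty q p.num.toNat < p.den := by
    refine (Nat.floor_lt (by positivity)).mpr ?_
    rw [← natCast_num_toNat_div hp]
    exact div_lt_div_of_pos_left (by exact_mod_cast hm) hpR hpq
  rw [tailSeq_one_eq_blockSeq hq hq2]
  exact umLT_of_blockSeq_of_lt (blockSpaced_beatty hpR (Rat.cast_le_half_iff.mpr hp2))
    (blockSpaced_beatty hq hq2) (fun i _ => beatty_anti hpR hpq.le i) hm
    (beatty_num_toNat hp ▸ hlt) (fun _ _ => rfl)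
    (fun k hk => cqSeq_eq_blockSeq hp hp2 (by omega))

end Comparison

theorem maximalSeq_tailSeq {q : ℝ} (hq : 0 < q) (hq2 : q ≤ 1 / 2) (hirr : Irrational q) :
    MaximalSeq (tailSeq q 1) := by
  classical
  have hg := blockSpaced_beatty hq hq2
  have hg1 : 1 < beatty q 1 := by have := two_mul_le_beatty hq hq2 1; omega
  rw [tailSeq_one_eq_blockSeq hq hq2]
  intro r
  rcases Nat.eq_zero_or_pos r with rfl | hr
  · exact Or.inr rfl
  refine Or.inl ?_
  by_cases hblock : ∃ i, 1 ≤ i ∧ (r = beatty q i ∨ r = beatty q i + 1)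
  · obtain ⟨i, hi, rfl | rfl⟩ := hblock
    · have h0 : shiftSeq (beatty q i) (blockSeq (beatty q)) 0 = 1 := by
        rw [shiftSeq, zero_add, blockSeq_self hi]
      have h1 : shiftSeq (beatty q i) (blockSeq (beatty q)) 1 = 1 := by
        rw [shiftSeq, add_comm, blockSeq_self_add_one hi]
      refine ⟨1, fun k hk => ?_, ?_, ?_⟩
      · rw [show k = 0 by omega, h0, blockSeq_zero]
      · rw [h1, hg.blockSeq_eq_zero_of_lt one_pos hg1]
        decide
      · rw [Finset.sum_range_succ, Finset.sum_range_one, h0, h1]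
        decide
    -- the shifted block `j` comes early exactly when `⌊(i + j)/q⌋` has no carry
    · obtain ⟨j, hj, hcarry⟩ := exists_beatty_add_eq hq hirr i
      rw [hg.shiftSeq_blockSeq hi]
      refine umLT_of_blockSeq_of_lt hg (hg.shifted hi) (fun t _ => ?_) hj ?_
        (fun _ _ => rfl) (fun _ _ => rfl)
      · have := beatty_add_le hq i t; omega
      · have := hg.one_le hj; omega
  · have hr0 : blockSeq (beatty q) r = 0 := if_neg (by rintro (h | h) <;> [omega; exact hblock h])
    refine ⟨0, fun k hk => absurd hk (Nat.not_lt_zero k), ?_, ?_⟩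
    · rw [shiftSeq, zero_add, hr0, blockSeq_zero]
      decide
    · simp [shiftSeq, hr0]

section Height

variable {α : Bseq} {q : ℝ}

lemma height_le_of_umLT {p : ℚ} (hp : 0 < p) (hp2 : p ≤ 1 / 2) (h : umLT (cqSeq p) α) :
    height α ≤ p :=
  csInf_le ⟨0, by rintro x (⟨p, rfl, hp, -, -⟩ | rfl) <;> [exact_mod_cast hp.le; norm_num]⟩
    (Or.inl ⟨p, rfl, hp, hp2, h⟩)

lemma le_height_of_forall {x : ℝ} (hx : x ≤ 1 / 2)
    (h : ∀ p : ℚ, 0 < p → p ≤ 1 / 2 → umLT (cqSeq p) α → x ≤ p) : x ≤ height α :=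
  le_csInf ⟨1 / 2, Or.inr rfl⟩ fun _ hy => by
    rcases hy with ⟨p, rfl, hp, hp2, hlt⟩ | rfl
    exacts [h p hp hp2 hlt, hx]

theorem height_tailSeq (hq : 0 < q) (hq2 : q < 1 / 2) : height (tailSeq q 1) = q := by
  refine le_antisymm (not_lt.mp fun hlt => ?_) (le_height_of_forall hq2.le fun p hp _ h =>
    not_lt.mp fun hpq => umLT_asymm h (tailSeq_umLT_cqSeq hp hpq hq2.le))
  obtain ⟨p, hqp, hp⟩ := exists_rat_btwn (lt_min hlt hq2)
  have hp2 : p ≤ 1 / 2 := Rat.cast_le_half_iff.mp (hp.le.trans (min_le_right _ _))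
  exact (height_le_of_umLT (Rat.cast_pos.mp (hq.trans hqp)) hp2
    (cqSeq_umLT_tailSeq hq hqp hp2)).not_gt (hp.trans_le (min_le_left _ _))

lemma eventually_den_gt (hirr : Irrational q) (n : ℕ) :
    ∀ᶠ x in 𝓝 q, ∀ p : ℚ, (p : ℝ) = x → n < p.den := by
  obtain ⟨ε, hε, hεpos⟩ := (((hirr.eventually_forall_le_dist_cast_rat_of_den_le n).filter_mono
    nhdsWithin_le_nhds).and (self_mem_nhdsWithin (s := Ioi 0))).exists
  filter_upwards [Metric.ball_mem_nhds q hεpos] with x hx p rfl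
  exact not_le.mp fun hden => (hε p hden).not_gt (by rwa [dist_comm])

theorem eventually_cqSeq_eq_tailSeq (hq : 0 < q) (hq2 : q < 1 / 2) (hirr : Irrational q)
    (n : ℕ) : ∀ᶠ x in 𝓝 q, ∀ p : ℚ, (p : ℝ) = x → ∀ k ≤ n, cqSeq p k = tailSeq q 1 k := by
  have hbeatty : ∀ᶠ x in 𝓝 q, ∀ i ∈ Iic (n + 1), beatty x i = beatty q i :=
    (finite_Iic _).eventually_all.mpr fun i _ => eventually_beatty_eq hq hirr i
  filter_upwards [Ioo_mem_nhds hq hq2, hbeatty, eventually_den_gt hirr n]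
    with x hx hbx hden p rfl k hk
  have hp2 : p ≤ 1 / 2 := Rat.cast_le_half_iff.mp hx.2.le
  have := two_mul_le_beatty hq hq2.le (n + 1)
  have := two_mul_le_beatty hx.1 hx.2.le (n + 1)
  rw [cqSeq_eq_blockSeq (Rat.cast_pos.mp hx.1) hp2 (hk.trans (hden p rfl).le),
    tailSeq_one_eq_blockSeq hq hq2.le]
  exact (blockSpaced_beatty hq hq2.le).blockSeq_congr (blockSpaced_beatty hx.1 hx.2.le)
    (I := n + 1) (by omega) (fun i _ hi => hbx i (by simp only [mem_Iic]; omega)) (by omega)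
    (by omega)

theorem height_lt_of_umLT (hq : 0 < q) (hq2 : q < 1 / 2) (hirr : Irrational q)
    (h : umLT (tailSeq q 1) α) : height α < q := by
  obtain ⟨r, -, hne, -⟩ := id h
  obtain ⟨ε, hε, hball⟩ := Metric.eventually_nhds_iff.mp (eventually_cqSeq_eq_tailSeq hq hq2 hirr r)
  obtain ⟨p, hp1, hpq⟩ := exists_rat_btwn (max_lt (sub_lt_self q hε) hq)
  have hdist : dist (p : ℝ) q < ε := by
    rw [Real.dist_eq, abs_sub_lt_iff]
    constructor <;> linarith [le_max_left (q - ε) 0]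
  have hagree := hball hdist p rfl
  calc height α ≤ p := height_le_of_umLT (Rat.cast_pos.mp ((le_max_right _ _).trans_lt hp1))
        (Rat.cast_le_half_iff.mp (by linarith))
        (umLT_of_eqOn_prefix (fun k hk => (hagree k hk).symm) (fun _ _ => rfl) le_rfl hne h)
    _ < q := hpq

theorem lt_height_of_umLT (hq : 0 < q) (hq2 : q < 1 / 2) (hirr : Irrational q)
    (h : umLT α (tailSeq q 1)) : q < height α := by
  obtain ⟨r, -, hne, -⟩ := id h
  obtain ⟨ε, hε, hball⟩ := Metric.eventually_nhds_iff.mp (eventually_cqSeq_eq_tailSeq hq hq2 hirr r)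
  refine (lt_min (lt_add_of_pos_right q hε) hq2).trans_le
    (le_height_of_forall (min_le_right _ _) fun p hp _ hlt => not_lt.mp fun hpε => ?_)
  rcases lt_or_gt_of_ne (hirr.ne_rat p).symm with hpq | hqp
  · exact umLT_asymm (umLT_trans hlt h) (tailSeq_umLT_cqSeq hp hpq hq2.le)
  · have hdist : dist (p : ℝ) q < ε := by
      rw [Real.dist_eq, abs_sub_lt_iff]
      constructor <;> linarith [min_le_left (q + ε) (1 / 2)]
    have hagree := hball hdist p rfl
    exact umLT_asymm h (umLT_of_eqOn_prefix hagree (fun _ _ => rfl) le_rfl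
      (by rw [hagree r le_rfl]; exact Ne.symm hne) hlt)

end Height

/-- For irrational `q ∈ (0,1/2)`, the sequence
`1 0^{κ_1(q)} 11 0^{κ_2(q)} 11 ⋯` is the unique element of `KS` of height `q`. -/
theorem stmt10 (q : ℝ) (h0 : 0 < q) (h2 : q < 1 / 2) (hirr : Irrational q) :
    KSseq (tailSeq q 1) ∧ height (tailSeq q 1) = q ∧
    ∀ α : Bseq, KSseq α → height α = q → α = tailSeq q 1 := by
  refine ⟨⟨maximalSeq_tailSeq h0 h2.le hirr, tailSeq_one_zero h0 h2.le, tailSeq_one_one h0 h2.le⟩,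
    height_tailSeq h0 h2, fun α _ hα => by_contra fun hne => ?_⟩
  rcases umLT_or_umLT_of_ne hne with h | h
  · exact (lt_height_of_umLT h0 h2 hirr h).ne' hα
  · exact (height_lt_of_umLT h0 h2 hirr h).ne hα
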